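/- arXiv:2412.03245 — 2 statements merged into one kernel-verified Lean document; each statement's English description precedes it below -/
import Mathlib

section
/- Fix ψ ∈ A(𝔻) not identically zero. A map T : ψA(𝔻) → ψA(𝔻) is an algebra automorphism (bijective, ℂ-linear and multiplicative) if and only if there exist φ ∈ Aut(𝔻) and an invertible element g of A(𝔻) (g ∈ A(𝔻) with g·h ≡ 1 on the closed unit disc for some h ∈ A(𝔻)) such that ψ ∘ φ̂ = ψ·g and T f = f ∘ φ̂ for all f ∈ ψA(𝔻), where φ̂ is the continuous extension of φ to the closed unit disc. -/
/-!
At a point `w` where `T ψ` does not vanish, `g ↦ T (ψ² g) w / (T ψ w)²` is a character of `A(𝔻)`,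
hence the evaluation at some point `φ(w)`, so that `T (ψ g) w = (T ψ) w · g (φ(w))`. Off the
zeros of `T ψ` this gives `φ = T (ψ z) / T ψ`, a quotient bounded by `1`, which therefore extends
holomorphically to the disc. Doing the same for `T⁻¹` yields a holomorphic inverse, so `φ` is an
automorphism of the disc and hence a Möbius map by the Schwarz lemma. The identity theorem then
spreads `T f = f ∘ φ` from an open set to the closed disc; `ψ ∘ φ = T ψ = ψ g`, and
`g · (g' ∘ φ) = 1` where `T⁻¹ ψ = ψ g'`.
-/

open Complex Metric Set

local notation "𝔻" => Complex.UnitDisc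

/-- The closed unit disc, as a subset of `ℂ`. -/
def cD : Set ℂ := Metric.closedBall 0 1

/-- A function on the open unit disc is analytic (holomorphic):
it is the restriction of a function differentiable on the open unit ball. -/
def HolOn (f : 𝔻 → ℂ) : Prop :=
  ∃ F : ℂ → ℂ, DifferentiableOn ℂ F (Metric.ball 0 1) ∧ ∀ z : 𝔻, F ↑z = f z

/-- Membership in `H^∞`, the algebra of bounded analytic functions on the unit disc. -/
def MemHinf (f : 𝔻 → ℂ) : Prop :=
  HolOn f ∧ ∃ M : ℝ, ∀ z : 𝔻, ‖f z‖ ≤ M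

/-- Membership in the disc algebra `A(𝔻)`: continuous on the closed unit disc,
analytic in its interior. -/
def MemDiscAlg (f : ↥cD → ℂ) : Prop :=
  ∃ F : ℂ → ℂ, ContinuousOn F cD ∧ DifferentiableOn ℂ F (Metric.ball 0 1) ∧
    ∀ z : ↥cD, F ↑z = f z

/-- `φ ∈ Aut(𝔻)`: a bijective analytic self-map of the unit disc. -/
def IsDiscAut (φ : 𝔻 → 𝔻) : Prop :=
  (∃ F : ℂ → ℂ, DifferentiableOn ℂ F (Metric.ball 0 1) ∧ ∀ z : 𝔻, F ↑z = ↑(φ z)) ∧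
  Function.Bijective φ

/-- A Möbius automorphism of the unit disc, given by its global formula
`Φ z = η (a - z) / (1 - conj a * z)` with `|a| < 1`, `|η| = 1`; this is the analytic
extension to (a neighbourhood of) the closed unit disc of a disc automorphism. -/
def IsMobius (Φ : ℂ → ℂ) : Prop :=
  ∃ a η : ℂ, ‖a‖ < 1 ∧ ‖η‖ = 1 ∧
    ∀ z : ℂ, Φ z = η * (a - z) / (1 - (starRingEnd ℂ) a * z)

/-- `T` is an algebra automorphism of the set `A` of complex-valued functions:
a bijective, `ℂ`-linear and multiplicative self-map of `A`. -/
def IsAlgAutOn {ι : Type} (A : Set (ι → ℂ)) (T : (ι → ℂ) → (ι → ℂ)) : Prop :=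
  (∀ f ∈ A, T f ∈ A) ∧
  (∀ f ∈ A, ∀ g ∈ A, T (f + g) = T f + T g) ∧
  (∀ (c : ℂ), ∀ f ∈ A, T (c • f) = c • T f) ∧
  (∀ f ∈ A, ∀ g ∈ A, T (f * g) = T f * T g) ∧
  Set.InjOn T A ∧ Set.SurjOn T A A

/-- The subalgebra `ψ H^∞ = {ψ · g : g ∈ H^∞}`. -/
def psiH (ψ : 𝔻 → ℂ) : Set (𝔻 → ℂ) :=
  {f | ∃ g, MemHinf g ∧ f = fun z => ψ z * g z}

/-- The subalgebra `ψ A(𝔻) = {ψ · g : g ∈ A(𝔻)}`. -/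
def psiA (ψ : ↥cD → ℂ) : Set (↥cD → ℂ) :=
  {f | ∃ g, MemDiscAlg g ∧ f = fun z => ψ z * g z}

/-- The composition operator `C_φ : f ↦ f ∘ φ` is a well-defined algebra automorphism
of the set `A` (it is automatically linear and multiplicative). -/
def CompAutOn (A : Set (𝔻 → ℂ)) (φ : 𝔻 → 𝔻) : Prop :=
  (∀ f ∈ A, f ∘ φ ∈ A) ∧ Set.InjOn (fun f => f ∘ φ) A ∧ Set.SurjOn (fun f => f ∘ φ) A A

/-- The Möbius factor `τ_a(z) = (a - z)/(1 - conj a · z)`. -/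
noncomputable def mobius (a z : ℂ) : ℂ := (a - z) / (1 - (starRingEnd ℂ) a * z)

/-- `f` has a zero of order (multiplicity) `k` at `w`:
`f z = (z - w)^k g z` with `g` analytic and `g w ≠ 0`. -/
def ZeroOrderAt (f : 𝔻 → ℂ) (w : 𝔻) (k : ℕ) : Prop :=
  ∃ g : 𝔻 → ℂ, HolOn g ∧ g w ≠ 0 ∧ ∀ z : 𝔻, f z = ((z : ℂ) - (w : ℂ)) ^ k * g z

/-- `g` is an invertible element of `H^∞`. -/
def InvHinf (g : 𝔻 → ℂ) : Prop :=
  MemHinf g ∧ ∃ h : 𝔻 → ℂ, MemHinf h ∧ ∀ z, g z * h z = 1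

/-- `g` is an invertible element of the disc algebra `A(𝔻)`. -/
def InvDiscAlg (g : ↥cD → ℂ) : Prop :=
  MemDiscAlg g ∧ ∃ h : ↥cD → ℂ, MemDiscAlg h ∧ ∀ z, g z * h z = 1

open Filter Topology ComplexConjugate

lemma mem_cD {z : ℂ} : z ∈ cD ↔ ‖z‖ ≤ 1 := mem_closedBall_zero_iff

lemma ball_subset_cD : ball (0 : ℂ) 1 ⊆ cD := ball_subset_closedBall

lemma closure_ball_eq_cD : closure (ball (0 : ℂ) 1) = cD := closure_ball 0 one_ne_zero

namespace Mobius

variable {a z : ℂ}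

lemma denom_ne_zero (ha : ‖a‖ < 1) (hz : ‖z‖ ≤ 1) : 1 - conj a * z ≠ 0 := by
  refine sub_ne_zero.mpr fun h => ?_
  have : ‖conj a * z‖ < 1 := by
    rw [norm_mul, Complex.norm_conj]
    nlinarith [norm_nonneg a, norm_nonneg z]
  rw [← h, norm_one] at this
  exact this.false

lemma normSq_denom_sub_normSq_num (a z : ℂ) :
    Complex.normSq (1 - conj a * z) - Complex.normSq (a - z) =
      (1 - Complex.normSq a) * (1 - Complex.normSq z) := by
  simp only [Complex.normSq_apply, Complex.sub_re, Complex.sub_im, Complex.mul_re,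
    Complex.mul_im, Complex.conj_re, Complex.conj_im, Complex.one_re, Complex.one_im]
  ring

lemma norm_numer_le_norm_denom (ha : ‖a‖ < 1) (hz : ‖z‖ ≤ 1) :
    ‖a - z‖ ≤ ‖1 - conj a * z‖ := by
  have key := normSq_denom_sub_normSq_num a z
  simp only [Complex.normSq_eq_norm_sq] at key
  refine (sq_le_sq₀ (norm_nonneg _) (norm_nonneg _)).mp ?_
  nlinarith [mul_nonneg (sub_nonneg.mpr (pow_le_one₀ (n := 2) (norm_nonneg a) ha.le))
    (sub_nonneg.mpr (pow_le_one₀ (n := 2) (norm_nonneg z) hz))]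

lemma norm_numer_lt_norm_denom (ha : ‖a‖ < 1) (hz : ‖z‖ < 1) :
    ‖a - z‖ < ‖1 - conj a * z‖ := by
  have key := normSq_denom_sub_normSq_num a z
  simp only [Complex.normSq_eq_norm_sq] at key
  refine (sq_lt_sq₀ (norm_nonneg _) (norm_nonneg _)).mp ?_
  nlinarith [mul_pos (sub_pos.mpr (pow_lt_one₀ (norm_nonneg a) ha two_ne_zero))
    (sub_pos.mpr (pow_lt_one₀ (norm_nonneg z) hz two_ne_zero))]

end Mobius

section MobiusMaps

open Mobius

variable {a z : ℂ}

lemma norm_mobius_le_one (ha : ‖a‖ < 1) (hz : ‖z‖ ≤ 1) : ‖mobius a z‖ ≤ 1 := by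
  rw [mobius, norm_div]
  exact div_le_one_of_le₀ (norm_numer_le_norm_denom ha hz) (norm_nonneg _)

lemma norm_mobius_lt_one (ha : ‖a‖ < 1) (hz : ‖z‖ < 1) : ‖mobius a z‖ < 1 := by
  rw [mobius, norm_div]
  exact (div_lt_one (norm_pos_iff.mpr (denom_ne_zero ha hz.le))).mpr
    (norm_numer_lt_norm_denom ha hz)

lemma mapsTo_mobius_ball (ha : ‖a‖ < 1) : MapsTo (mobius a) (ball 0 1) (ball 0 1) :=
  fun _ hz => mem_ball_zero_iff.mpr (norm_mobius_lt_one ha (mem_ball_zero_iff.mp hz))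

lemma mapsTo_mobius_cD (ha : ‖a‖ < 1) : MapsTo (mobius a) cD cD :=
  fun _ hz => mem_cD.mpr (norm_mobius_le_one ha (mem_cD.mp hz))

@[simp] lemma mobius_zero (a : ℂ) : mobius a 0 = a := by simp [mobius]

@[simp] lemma mobius_self (a : ℂ) : mobius a a = 0 := by simp [mobius]

lemma mobius_mobius (ha : ‖a‖ < 1) (hz : ‖z‖ ≤ 1) : mobius a (mobius a z) = z := by
  have h₁ := denom_ne_zero ha hz
  have h₂ := denom_ne_zero ha (norm_mobius_le_one ha hz)
  simp only [mobius] at h₂ ⊢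
  rw [div_eq_iff h₂]
  linear_combination (z - a) * mul_inv_cancel₀ h₁

lemma differentiableAt_mobius (ha : ‖a‖ < 1) (hz : ‖z‖ ≤ 1) :
    DifferentiableAt ℂ (mobius a) z :=
  ((differentiableAt_const a).sub differentiableAt_id).div
    ((differentiableAt_const 1).sub ((differentiableAt_const _).mul differentiableAt_id))
    (denom_ne_zero ha hz)

lemma differentiableOn_mobius (ha : ‖a‖ < 1) : DifferentiableOn ℂ (mobius a) (ball 0 1) :=
  fun _ hz => (differentiableAt_mobius ha (mem_ball_zero_iff.mp hz).le).differentiableWithinAt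

lemma continuousOn_mobius (ha : ‖a‖ < 1) : ContinuousOn (mobius a) cD :=
  fun _ hz => (differentiableAt_mobius ha (mem_cD.mp hz)).continuousAt.continuousWithinAt

lemma isMobius_mul_mobius {η : ℂ} (ha : ‖a‖ < 1) (hη : ‖η‖ = 1) :
    IsMobius fun z => η * mobius a z :=
  ⟨a, η, ha, hη, fun _ => (mul_div_assoc η _ _).symm⟩

end MobiusMaps

namespace IsMobius

variable {Φ : ℂ → ℂ}

lemma exists_eq (hΦ : IsMobius Φ) :
    ∃ a η : ℂ, ‖a‖ < 1 ∧ ‖η‖ = 1 ∧ Φ = fun z => η * mobius a z := by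
  obtain ⟨a, η, ha, hη, hΦ⟩ := hΦ
  exact ⟨a, η, ha, hη, funext fun z => (hΦ z).trans (mul_div_assoc η _ _)⟩

lemma mapsTo_ball (hΦ : IsMobius Φ) : MapsTo Φ (ball 0 1) (ball 0 1) := by
  obtain ⟨a, η, ha, hη, rfl⟩ := hΦ.exists_eq
  intro z hz
  simpa [hη] using mapsTo_mobius_ball ha hz

lemma mapsTo_cD (hΦ : IsMobius Φ) : MapsTo Φ cD cD := by
  obtain ⟨a, η, ha, hη, rfl⟩ := hΦ.exists_eq
  intro z hz
  simpa [mem_cD, hη] using mapsTo_mobius_cD ha hz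

lemma continuousOn (hΦ : IsMobius Φ) : ContinuousOn Φ cD := by
  obtain ⟨a, η, ha, -, rfl⟩ := hΦ.exists_eq
  exact continuousOn_const.mul (continuousOn_mobius ha)

lemma differentiableOn (hΦ : IsMobius Φ) : DifferentiableOn ℂ Φ (ball 0 1) := by
  obtain ⟨a, η, ha, -, rfl⟩ := hΦ.exists_eq
  exact (differentiableOn_const η).mul (differentiableOn_mobius ha)

/-- The inverse of `z ↦ η τ_a(z)` is `w ↦ conj η · τ_{η a}(w) = τ_a(conj η · w)`. -/
lemma exists_inverse (hΦ : IsMobius Φ) :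
    ∃ Ψ, IsMobius Ψ ∧ ∀ z ∈ cD, Ψ (Φ z) = z ∧ Φ (Ψ z) = z := by
  obtain ⟨a, η, ha, hη, rfl⟩ := hΦ.exists_eq
  have hηη : conj η * η = 1 := by
    rw [mul_comm, Complex.mul_conj, Complex.normSq_eq_norm_sq, hη]
    norm_num
  have hΨ : ∀ w, conj η * mobius (η * a) w = mobius a (conj η * w) := by
    intro w
    simp only [mobius, map_mul, ← mul_div_assoc]
    congr 1
    · linear_combination a * hηη
    · ring
  refine ⟨fun w => conj η * mobius (η * a) w, isMobius_mul_mobius (by simpa [hη] using ha)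
    (by simpa using hη), fun z hz => ⟨?_, ?_⟩⟩
  · simp only [hΨ, ← mul_assoc, hηη, one_mul, mobius_mobius ha (mem_cD.mp hz)]
  · have : ‖conj η * z‖ ≤ 1 := by simpa [hη] using mem_cD.mp hz
    show η * mobius a (conj η * mobius (η * a) z) = z
    rw [hΨ, mobius_mobius ha this, ← mul_assoc, mul_comm η, hηη, one_mul]

end IsMobius

namespace MemDiscAlg

variable {f g : ↥cD → ℂ}

lemma continuous (hf : MemDiscAlg f) : Continuous f := by
  obtain ⟨F, hFc, -, hF⟩ := hf
  convert hFc.comp_continuous continuous_subtype_val Subtype.prop using 1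
  exact funext fun z => (hF z).symm

lemma add (hf : MemDiscAlg f) (hg : MemDiscAlg g) : MemDiscAlg (f + g) := by
  obtain ⟨F, hFc, hFd, hF⟩ := hf
  obtain ⟨G, hGc, hGd, hG⟩ := hg
  exact ⟨F + G, hFc.add hGc, hFd.add hGd, fun z => by simp [hF, hG]⟩

lemma mul (hf : MemDiscAlg f) (hg : MemDiscAlg g) : MemDiscAlg (f * g) := by
  obtain ⟨F, hFc, hFd, hF⟩ := hf
  obtain ⟨G, hGc, hGd, hG⟩ := hg
  exact ⟨F * G, hFc.mul hGc, hFd.mul hGd, fun z => by simp [hF, hG]⟩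

lemma smul (c : ℂ) (hf : MemDiscAlg f) : MemDiscAlg (c • f) := by
  obtain ⟨F, hFc, hFd, hF⟩ := hf
  exact ⟨c • F, hFc.const_smul c, hFd.const_smul c, fun z => by simp [hF]⟩

lemma sub (hf : MemDiscAlg f) (hg : MemDiscAlg g) : MemDiscAlg (f - g) := by
  obtain ⟨F, hFc, hFd, hF⟩ := hf
  obtain ⟨G, hGc, hGd, hG⟩ := hg
  exact ⟨F - G, hFc.sub hGc, hFd.sub hGd, fun z => by simp [hF, hG]⟩

lemma inv (hf : MemDiscAlg f) (hf₀ : ∀ z, f z ≠ 0) : MemDiscAlg f⁻¹ := by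
  obtain ⟨F, hFc, hFd, hF⟩ := hf
  have hF₀ : ∀ x ∈ cD, F x ≠ 0 := fun x hx => hF ⟨x, hx⟩ ▸ hf₀ ⟨x, hx⟩
  exact ⟨F⁻¹, hFc.inv₀ hF₀, hFd.inv fun x hx => hF₀ x (ball_subset_cD hx),
    fun z => by simp [hF]⟩

end MemDiscAlg

lemma memDiscAlg_const (c : ℂ) : MemDiscAlg fun _ => c :=
  ⟨fun _ => c, continuousOn_const, differentiableOn_const c, fun _ => rfl⟩

lemma memDiscAlg_one : MemDiscAlg 1 := memDiscAlg_const 1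

lemma memDiscAlg_val : MemDiscAlg Subtype.val :=
  ⟨id, continuousOn_id, differentiableOn_id, fun _ => rfl⟩

lemma memDiscAlg_of_differentiableOn {F : ℂ → ℂ} {R : ℝ} (hR : 1 < R)
    (hF : DifferentiableOn ℂ F (ball 0 R)) : MemDiscAlg fun z => F z :=
  have hsub : cD ⊆ ball 0 R := closedBall_subset_ball hR
  ⟨F, (hF.mono hsub).continuousOn, hF.mono (ball_subset_cD.trans hsub), fun _ => rfl⟩

lemma MemDiscAlg.comp_isMobius {f : ↥cD → ℂ} {Φ : ℂ → ℂ} {φ : ↥cD → ↥cD} (hf : MemDiscAlg f)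
    (hΦ : IsMobius Φ) (hφ : ∀ z, (φ z : ℂ) = Φ z) : MemDiscAlg (f ∘ φ) := by
  obtain ⟨F, hFc, hFd, hF⟩ := hf
  exact ⟨F ∘ Φ, hFc.comp hΦ.continuousOn hΦ.mapsTo_cD, hFd.comp hΦ.differentiableOn hΦ.mapsTo_ball,
    fun z => by simp [← hφ, hF]⟩

lemma map_val_nhds_of_mem_ball {w : ↥cD} (hw : (w : ℂ) ∈ ball 0 1) :
    map Subtype.val (𝓝 w) = 𝓝 (w : ℂ) :=
  map_nhds_subtype_coe_eq_nhds w.2 (mem_of_superset (isOpen_ball.mem_nhds hw) ball_subset_cD)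

lemma eventuallyEq_nhds_val {α : Type*} {F G : ℂ → α} {w : ↥cD} (hw : (w : ℂ) ∈ ball 0 1)
    (h : ∀ᶠ z : ↥cD in 𝓝 w, F z = G z) : F =ᶠ[𝓝 (w : ℂ)] G := by
  rw [← map_val_nhds_of_mem_ball hw]
  exact h

lemma exists_ne_of_eventually {w₀ : ↥cD} (hw₀ : (w₀ : ℂ) ∈ ball 0 1) {p : ↥cD → Prop}
    (h : ∀ᶠ w in 𝓝 w₀, p w) : ∃ w ≠ w₀, p w := by
  have hp : Subtype.val '' {w | p w} ∈ 𝓝 (w₀ : ℂ) :=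
    map_val_nhds_of_mem_ball hw₀ ▸ image_mem_map h
  obtain ⟨_, ⟨w, hw, rfl⟩, hne⟩ : (Subtype.val '' {w | p w} ∩ {(w₀ : ℂ)}ᶜ).Nonempty :=
    nonempty_of_mem (inter_mem (mem_nhdsWithin_of_mem_nhds hp) self_mem_nhdsWithin)
  exact ⟨w, fun h => hne (h ▸ rfl), hw⟩

lemma eqOn_cD_of_eventuallyEq {F G : ℂ → ℂ} (hFc : ContinuousOn F cD)
    (hFd : DifferentiableOn ℂ F (ball 0 1)) (hGc : ContinuousOn G cD)
    (hGd : DifferentiableOn ℂ G (ball 0 1)) {x₀ : ℂ} (hx₀ : x₀ ∈ ball 0 1) (h : F =ᶠ[𝓝 x₀] G) :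
    EqOn F G cD :=
  ((hFd.analyticOnNhd isOpen_ball).eqOn_of_preconnected_of_eventuallyEq
    (hGd.analyticOnNhd isOpen_ball) (convex_ball 0 1).isPreconnected hx₀ h).of_subset_closure
    hFc hGc ball_subset_cD closure_ball_eq_cD.ge

namespace MemDiscAlg

variable {f g : ↥cD → ℂ}

lemma eq_of_eventuallyEq (hf : MemDiscAlg f) (hg : MemDiscAlg g) {w₀ : ↥cD}
    (hw₀ : (w₀ : ℂ) ∈ ball 0 1) (h : f =ᶠ[𝓝 w₀] g) : f = g := by
  obtain ⟨F, hFc, hFd, hF⟩ := hf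
  obtain ⟨G, hGc, hGd, hG⟩ := hg
  have hFG := eqOn_cD_of_eventuallyEq hFc hFd hGc hGd hw₀ <|
    eventuallyEq_nhds_val hw₀ (h.mono fun w hw => by simp [hF, hG, hw])
  exact funext fun w => by rw [← hF, ← hG, hFG w.2]

lemma exists_mem_ball_ne_zero (hf : MemDiscAlg f) (hf₀ : f ≠ 0) :
    ∃ w : ↥cD, (w : ℂ) ∈ ball 0 1 ∧ f w ≠ 0 := by
  by_contra! h
  obtain ⟨F, hFc, -, hF⟩ := hf
  have hball : EqOn F 0 (ball 0 1) := fun x hx => (hF ⟨x, ball_subset_cD hx⟩).trans (h _ hx)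
  have hcD := hball.of_subset_closure hFc continuousOn_const ball_subset_cD closure_ball_eq_cD.ge
  exact hf₀ (funext fun w => (hF w).symm.trans (hcD w.2))

lemma eventually_mem_ball_ne_zero (hf : MemDiscAlg f) {w₀ : ↥cD} (hw₀ : (w₀ : ℂ) ∈ ball 0 1)
    (hfw₀ : f w₀ ≠ 0) : ∀ᶠ w : ↥cD in 𝓝 w₀, (w : ℂ) ∈ ball 0 1 ∧ f w ≠ 0 := by
  filter_upwards [(isOpen_ball.preimage continuous_subtype_val).mem_nhds hw₀,
    hf.continuous.continuousAt.eventually_ne hfw₀] with w hw hfw using ⟨hw, hfw⟩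

lemma eq_of_mul_eq_mul {ψ : ↥cD → ℂ} (hψ : MemDiscAlg ψ) (hψ₀ : ψ ≠ 0) (hf : MemDiscAlg f)
    (hg : MemDiscAlg g) (h : ψ * f = ψ * g) : f = g := by
  obtain ⟨w₀, hw₀, hψw₀⟩ := hψ.exists_mem_ball_ne_zero hψ₀
  refine hf.eq_of_eventuallyEq hg hw₀ ?_
  filter_upwards [hψ.continuous.continuousAt.eventually_ne hψw₀] with w hw
  exact mul_left_cancel₀ hw (congrFun h w)

end MemDiscAlg

lemma exists_norm_sub_comp_mul_le {F : ℂ → ℂ} (hF : ContinuousOn F cD) {ε : ℝ} (hε : 0 < ε) :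
    ∃ r ∈ Ioo (0 : ℝ) 1, ∀ z ∈ cD, ‖F z - F (r * z)‖ ≤ ε := by
  obtain ⟨δ, hδ, hFδ⟩ := Metric.uniformContinuousOn_iff_le.mp
    ((isCompact_closedBall 0 1).uniformContinuousOn_of_continuous hF) ε hε
  set r := max (1 / 2) (1 - δ)
  have hr₀ : 0 < r := lt_max_of_lt_left (by norm_num)
  have hr₁ : r < 1 := max_lt (by norm_num) (by linarith)
  have hδr : 1 - r ≤ δ := by linarith [le_max_right (1 / 2) (1 - δ)]
  refine ⟨r, ⟨hr₀, hr₁⟩, fun z hz => ?_⟩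
  have hz₁ := mem_cD.mp hz
  have hrz : (r : ℂ) * z ∈ cD := by
    rw [mem_cD, norm_mul, Complex.norm_real, Real.norm_eq_abs, abs_of_pos hr₀]
    nlinarith
  rw [← dist_eq_norm]
  refine hFδ z hz _ hrz ?_
  rw [dist_eq_norm, show z - r * z = ((1 - r : ℝ) : ℂ) * z by push_cast; ring, norm_mul,
    Complex.norm_real, Real.norm_eq_abs, abs_of_pos (by linarith)]
  nlinarith

structure IsDiscAlgChar (χ : (↥cD → ℂ) → ℂ) : Prop where
  map_one : χ 1 = 1
  map_add {f g} : MemDiscAlg f → MemDiscAlg g → χ (f + g) = χ f + χ g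
  map_smul (c : ℂ) {f} : MemDiscAlg f → χ (c • f) = c * χ f
  map_mul {f g} : MemDiscAlg f → MemDiscAlg g → χ (f * g) = χ f * χ g

namespace IsDiscAlgChar

variable {χ : (↥cD → ℂ) → ℂ} {f g : ↥cD → ℂ}

lemma map_const (hχ : IsDiscAlgChar χ) (c : ℂ) : χ (fun _ => c) = c := by
  rw [show (fun _ => c) = c • (1 : ↥cD → ℂ) by ext; simp, hχ.map_smul c memDiscAlg_one,
    hχ.map_one, mul_one]

lemma map_sub (hχ : IsDiscAlgChar χ) (hf : MemDiscAlg f) (hg : MemDiscAlg g) :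
    χ (f - g) = χ f - χ g := by
  rw [sub_eq_add_neg, ← neg_one_smul ℂ g, hχ.map_add hf (hg.smul _), hχ.map_smul _ hg]
  ring

/-- The spectral bound: otherwise `f - χ f` would be invertible in `A(𝔻)` and killed by `χ`. -/
lemma norm_le (hχ : IsDiscAlgChar χ) (hf : MemDiscAlg f) {m : ℝ} (hm : ∀ z, ‖f z‖ ≤ m) :
    ‖χ f‖ ≤ m := by
  by_contra! hlt
  set u := f - fun _ => χ f
  have hu₀ : ∀ z, u z ≠ 0 := fun z h => by
    have h' : f z = χ f := sub_eq_zero.mp h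
    exact (hm z).not_gt (by rwa [h'])
  have hu : MemDiscAlg u := hf.sub (memDiscAlg_const _)
  have h := congrArg χ (show u * u⁻¹ = 1 from funext fun z => mul_inv_cancel₀ (hu₀ z))
  rw [hχ.map_mul hu (hu.inv hu₀), hχ.map_sub hf (memDiscAlg_const _), hχ.map_const, sub_self,
    zero_mul, hχ.map_one] at h
  exact zero_ne_one h

lemma norm_apply_val_le_one (hχ : IsDiscAlgChar χ) : ‖χ Subtype.val‖ ≤ 1 :=
  hχ.norm_le memDiscAlg_val fun z => mem_cD.mp z.2

/-- For `F` holomorphic beyond the closed disc, `F - F v` is divisible by `z - v` in `A(𝔻)`. -/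
lemma apply_eq_of_differentiableOn (hχ : IsDiscAlgChar χ) {F : ℂ → ℂ} {R : ℝ} (hR : 1 < R)
    (hF : DifferentiableOn ℂ F (ball 0 R)) : χ (fun z => F z) = F (χ Subtype.val) := by
  set v := χ Subtype.val
  have hv : v ∈ ball (0 : ℂ) R := mem_ball_zero_iff.mpr (hχ.norm_apply_val_le_one.trans_lt hR)
  have hk := memDiscAlg_of_differentiableOn hR
    ((Complex.differentiableOn_dslope (isOpen_ball.mem_nhds hv)).mpr hF)
  have hlin : MemDiscAlg (Subtype.val - fun _ => v) := memDiscAlg_val.sub (memDiscAlg_const v)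
  have hsplit : (fun z : ↥cD => F z) =
      (fun _ => F v) + (Subtype.val - fun _ => v) * fun z : ↥cD => dslope F v z := by
    ext z
    simp [← smul_eq_mul, sub_smul_dslope]
  rw [hsplit, hχ.map_add (memDiscAlg_const _) (hlin.mul hk), hχ.map_mul hlin hk,
    hχ.map_sub memDiscAlg_val (memDiscAlg_const v), hχ.map_const, hχ.map_const, sub_self,
    zero_mul, add_zero]

/-- Approximate `f` uniformly by the dilations `z ↦ f (r z)`, which are holomorphic beyond the
closed disc. -/
theorem exists_eval (hχ : IsDiscAlgChar χ) : ∃ v : ↥cD, ∀ f, MemDiscAlg f → χ f = f v := by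
  have hv : χ Subtype.val ∈ cD := mem_cD.mpr hχ.norm_apply_val_le_one
  refine ⟨⟨_, hv⟩, fun f hf => ?_⟩
  obtain ⟨F, hFc, hFd, hF⟩ := id hf
  refine eq_of_forall_dist_le fun ε hε => ?_
  obtain ⟨r, ⟨hr₀, hr₁⟩, hr⟩ := exists_norm_sub_comp_mul_le hFc (half_pos hε)
  have hFr : DifferentiableOn ℂ (fun x => F (r * x)) (ball 0 r⁻¹) := by
    refine hFd.comp ((differentiableOn_const _).mul differentiableOn_id) fun x hx => ?_
    rw [mem_ball_zero_iff, norm_mul, Complex.norm_real, Real.norm_eq_abs, abs_of_pos hr₀]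
    rw [mem_ball_zero_iff] at hx
    calc r * ‖x‖ < r * r⁻¹ := mul_lt_mul_of_pos_left hx hr₀
      _ = 1 := mul_inv_cancel₀ hr₀.ne'
  have hR : 1 < r⁻¹ := (one_lt_inv₀ hr₀).mpr hr₁
  have hmem := memDiscAlg_of_differentiableOn hR hFr
  have h₁ : ‖χ f - F (r * χ Subtype.val)‖ ≤ ε / 2 := by
    rw [← hχ.apply_eq_of_differentiableOn hR hFr, ← hχ.map_sub hf hmem]
    exact hχ.norm_le (hf.sub hmem) fun z => by simpa [hF] using hr z z.2
  have h₂ : ‖F (r * χ Subtype.val) - f ⟨_, hv⟩‖ ≤ ε / 2 := by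
    rw [← hF, norm_sub_rev]
    exact hr _ hv
  rw [dist_eq_norm]
  linarith [norm_sub_le_norm_sub_add_norm_sub (χ f) (F (r * χ Subtype.val)) (f ⟨_, hv⟩)]

end IsDiscAlgChar

section PsiA

variable {ψ f g : ↥cD → ℂ}

lemma mem_psiA : f ∈ psiA ψ ↔ ∃ g, MemDiscAlg g ∧ f = ψ * g := Iff.rfl

lemma mul_mem_psiA (hg : MemDiscAlg g) : ψ * g ∈ psiA ψ := ⟨g, hg, rfl⟩

lemma self_mem_psiA : ψ ∈ psiA ψ := by
  simpa using mul_mem_psiA (ψ := ψ) memDiscAlg_one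

lemma MemDiscAlg.of_mem_psiA (hψ : MemDiscAlg ψ) (hf : f ∈ psiA ψ) : MemDiscAlg f := by
  obtain ⟨g, hg, rfl⟩ := mem_psiA.mp hf
  exact hψ.mul hg

lemma add_mem_psiA (hf : f ∈ psiA ψ) (hg : g ∈ psiA ψ) : f + g ∈ psiA ψ := by
  obtain ⟨a, ha, rfl⟩ := mem_psiA.mp hf
  obtain ⟨b, hb, rfl⟩ := mem_psiA.mp hg
  simpa [mul_add] using mul_mem_psiA (ψ := ψ) (ha.add hb)

lemma smul_mem_psiA (c : ℂ) (hf : f ∈ psiA ψ) : c • f ∈ psiA ψ := by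
  obtain ⟨a, ha, rfl⟩ := mem_psiA.mp hf
  simpa using mul_mem_psiA (ψ := ψ) (ha.smul c)

lemma mul_mem_psiA_of_mem (hψ : MemDiscAlg ψ) (hf : f ∈ psiA ψ) (hg : g ∈ psiA ψ) :
    f * g ∈ psiA ψ := by
  obtain ⟨a, ha, rfl⟩ := mem_psiA.mp hf
  simpa [mul_assoc] using mul_mem_psiA (ψ := ψ) (ha.mul (hψ.of_mem_psiA hg))

end PsiA

namespace IsAlgAutOn

variable {ι : Type} {A : Set (ι → ℂ)} {T : (ι → ℂ) → (ι → ℂ)}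

lemma apply_ne_zero (hT : IsAlgAutOn A T) (hsmul : ∀ (c : ℂ), ∀ f ∈ A, c • f ∈ A)
    {f : ι → ℂ} (hf : f ∈ A) (hf₀ : f ≠ 0) : T f ≠ 0 := by
  intro h
  have h₀ : T ((0 : ℂ) • f) = T f := by rw [hT.2.2.1 0 f hf, zero_smul, h]
  exact hf₀ ((hT.2.2.2.2.1 (hsmul 0 f hf) hf h₀).symm.trans (zero_smul ℂ f))

theorem exists_inverse (hT : IsAlgAutOn A T) (hadd : ∀ f ∈ A, ∀ g ∈ A, f + g ∈ A)
    (hsmul : ∀ (c : ℂ), ∀ f ∈ A, c • f ∈ A) (hmul : ∀ f ∈ A, ∀ g ∈ A, f * g ∈ A) :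
    ∃ T', IsAlgAutOn A T' ∧ (∀ f ∈ A, T (T' f) = f) ∧ ∀ f ∈ A, T' (T f) = f := by
  obtain ⟨hmaps, hTadd, hTsmul, hTmul, hinj, hsurj⟩ := hT
  have hbij : BijOn T A A := ⟨hmaps, hinj, hsurj⟩
  have hinv := hbij.invOn_invFunOn
  have hbij' := hbij.symm hinv.symm
  set T' := Function.invFunOn T A
  have hT' : ∀ x ∈ A, ∀ f, T x = f → T' f = x := fun x hx f h => h ▸ hinv.1 hx
  have hmem : ∀ {f}, f ∈ A → T' f ∈ A := fun hf => hbij'.mapsTo hf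
  refine ⟨T', ⟨hbij'.mapsTo, fun f hf g hg => ?_, fun c f hf => ?_, fun f hf g hg => ?_,
    hbij'.injOn, hbij'.surjOn⟩, fun f hf => hinv.2 hf, fun f hf => hinv.1 hf⟩
  · exact hT' _ (hadd _ (hmem hf) _ (hmem hg)) _ <| by
      rw [hTadd _ (hmem hf) _ (hmem hg), hinv.2 hf, hinv.2 hg]
  · exact hT' _ (hsmul c _ (hmem hf)) _ <| by rw [hTsmul c _ (hmem hf), hinv.2 hf]
  · exact hT' _ (hmul _ (hmem hf) _ (hmem hg)) _ <| by
      rw [hTmul _ (hmem hf) _ (hmem hg), hinv.2 hf, hinv.2 hg]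

end IsAlgAutOn

open scoped Classical in
/-- The point `φ(w)` with `T (ψ g) w = (T ψ) w · g (φ(w))` for all `g ∈ A(𝔻)`; it exists
whenever `(T ψ) w ≠ 0`, and is junk (`w`) otherwise. -/
noncomputable def evalPoint (ψ : ↥cD → ℂ) (T : (↥cD → ℂ) → (↥cD → ℂ)) (w : ↥cD) : ↥cD :=
  if h : ∃ v, ∀ g, MemDiscAlg g → T (ψ * g) w = T ψ w * g v then h.choose else w

section EvalPoint

variable {ψ : ↥cD → ℂ} {T T' : (↥cD → ℂ) → (↥cD → ℂ)} {w : ↥cD}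

/-- At a point `w` with `(T ψ) w ≠ 0`, the functional `g ↦ T (ψ² g) w / (T ψ w)²` is a
character of `A(𝔻)`, hence a point evaluation. -/
theorem IsAlgAutOn.exists_evalPoint (hT : IsAlgAutOn (psiA ψ) T) (hψ : MemDiscAlg ψ)
    (hw : T ψ w ≠ 0) : ∃ v, ∀ g, MemDiscAlg g → T (ψ * g) w = T ψ w * g v := by
  obtain ⟨-, hadd, hsmul, hmul, -, -⟩ := hT
  have hmulw : ∀ f ∈ psiA ψ, ∀ g ∈ psiA ψ, T (f * g) w = T f w * T g w :=
    fun f hf g hg => congrFun (hmul f hf g hg) w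
  have hmem : ∀ {g}, MemDiscAlg g → ψ * ψ * g ∈ psiA ψ := fun hg => by
    rw [mul_assoc]
    exact mul_mem_psiA (hψ.mul hg)
  have hψψ : T (ψ * ψ) w = T ψ w ^ 2 := by
    rw [hmulw _ self_mem_psiA _ self_mem_psiA, sq]
  have hD : T ψ w ^ 2 ≠ 0 := pow_ne_zero 2 hw
  let χ : (↥cD → ℂ) → ℂ := fun g => T (ψ * ψ * g) w / T ψ w ^ 2
  have hχ : IsDiscAlgChar χ :=
    { map_one := by simp only [χ, mul_one, hψψ, div_self hD]
      map_add := fun hf hg => by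
        simp only [χ, mul_add, hadd _ (hmem hf) _ (hmem hg), Pi.add_apply, add_div]
      map_smul := fun c f hf => by
        simp only [χ, mul_smul_comm, hsmul c _ (hmem hf), Pi.smul_apply, smul_eq_mul,
          mul_div_assoc]
      map_mul := fun {f g} hf hg => by
        have h : T (ψ * ψ * f) w * T (ψ * ψ * g) w = T (ψ * ψ * (f * g)) w * T ψ w ^ 2 := by
          rw [← hψψ, ← hmulw _ (hmem hf) _ (hmem hg),
            ← hmulw _ (hmem (hf.mul hg)) _ (mul_mem_psiA hψ),
            show ψ * ψ * f * (ψ * ψ * g) = ψ * ψ * (f * g) * (ψ * ψ) by ring]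
        simp only [χ]
        rw [div_mul_div_comm, h, mul_div_mul_right _ _ hD] }
  obtain ⟨v, hv⟩ := hχ.exists_eval
  refine ⟨v, fun g hg => mul_right_cancel₀ hw ?_⟩
  calc T (ψ * g) w * T ψ w = T (ψ * ψ * g) w := by
        rw [← hmulw _ (mul_mem_psiA hg) _ self_mem_psiA, mul_right_comm]
    _ = χ g * T ψ w ^ 2 := (div_mul_cancel₀ _ hD).symm
    _ = T ψ w * g v * T ψ w := by rw [hv g hg]; ring

lemma evalPoint_spec (hψ : MemDiscAlg ψ) (hT : IsAlgAutOn (psiA ψ) T) (hw : T ψ w ≠ 0)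
    {g : ↥cD → ℂ} (hg : MemDiscAlg g) : T (ψ * g) w = T ψ w * g (evalPoint ψ T w) := by
  have h := hT.exists_evalPoint hψ hw
  rw [evalPoint, dif_pos h]
  exact h.choose_spec g hg

lemma psi_evalPoint (hψ : MemDiscAlg ψ) (hT : IsAlgAutOn (psiA ψ) T) (hw : T ψ w ≠ 0) :
    ψ (evalPoint ψ T w) = T ψ w :=
  mul_left_cancel₀ hw <| (evalPoint_spec hψ hT hw hψ).symm.trans
    (congrFun (hT.2.2.2.1 _ self_mem_psiA _ self_mem_psiA) w)

lemma psi_ne_zero_of_apply_ne_zero (hT : IsAlgAutOn (psiA ψ) T) (hw : T ψ w ≠ 0) : ψ w ≠ 0 := by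
  obtain ⟨g, -, hg⟩ := mem_psiA.mp (hT.1 ψ self_mem_psiA)
  rw [hg] at hw
  exact left_ne_zero_of_mul hw

lemma evalPoint_evalPoint (hψ : MemDiscAlg ψ) (hT : IsAlgAutOn (psiA ψ) T)
    (hT' : IsAlgAutOn (psiA ψ) T') (hTT' : ∀ f ∈ psiA ψ, T (T' f) = f) (hw : T ψ w ≠ 0) :
    T' ψ (evalPoint ψ T w) ≠ 0 ∧ evalPoint ψ T' (evalPoint ψ T w) = w := by
  set u := evalPoint ψ T w
  have key : ∀ h, MemDiscAlg h → ψ w * h w = T' (ψ * h) u := by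
    intro h hh
    obtain ⟨k, hk, hT'k⟩ := mem_psiA.mp (hT'.1 _ (mul_mem_psiA hh))
    calc ψ w * h w = T (ψ * k) w := by rw [← hT'k, hTT' _ (mul_mem_psiA hh)]; rfl
      _ = ψ u * k u := by rw [evalPoint_spec hψ hT hw hk, psi_evalPoint hψ hT hw]
      _ = T' (ψ * h) u := by rw [hT'k]; rfl
  have hψw := psi_ne_zero_of_apply_ne_zero hT hw
  have hu : T' ψ u = ψ w := by simpa using (key 1 memDiscAlg_one).symm
  refine ⟨hu ▸ hψw, Subtype.ext (mul_left_cancel₀ hψw ?_)⟩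
  rw [key _ memDiscAlg_val, evalPoint_spec hψ hT' (hu ▸ hψw) memDiscAlg_val, hu]

end EvalPoint

lemma eventually_ne_zero_nhdsNE {P : ℂ → ℂ} (hP : DifferentiableOn ℂ P (ball 0 1))
    (hP₀ : ∃ x ∈ ball (0 : ℂ) 1, P x ≠ 0) {x₀ : ℂ} (hx₀ : x₀ ∈ ball (0 : ℂ) 1) :
    ∀ᶠ u in 𝓝[≠] x₀, P u ≠ 0 := by
  have hPa := hP.analyticOnNhd isOpen_ball
  refine (hPa x₀ hx₀).eventually_eq_zero_or_eventually_ne_zero.resolve_left fun h => ?_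
  obtain ⟨x, hx, hPx⟩ := hP₀
  exact hPx (hPa.eqOn_zero_of_preconnected_of_eventuallyEq_zero
    (convex_ball 0 1).isPreconnected hx₀ h hx)

/-- Riemann's removable singularity theorem at the zeros of `P`, which are isolated. -/
theorem exists_differentiableOn_eq_div {P Q : ℂ → ℂ} (hP : DifferentiableOn ℂ P (ball 0 1))
    (hQ : DifferentiableOn ℂ Q (ball 0 1)) (hP₀ : ∃ x ∈ ball (0 : ℂ) 1, P x ≠ 0)
    (hQP : ∀ x ∈ ball (0 : ℂ) 1, P x ≠ 0 → ‖Q x / P x‖ ≤ 1) :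
    ∃ f : ℂ → ℂ, DifferentiableOn ℂ f (ball 0 1) ∧ MapsTo f (ball 0 1) (closedBall 0 1) ∧
      ∀ x ∈ ball (0 : ℂ) 1, P x ≠ 0 → f x = Q x / P x := by
  have hdiv : ∀ x ∈ ball (0 : ℂ) 1, P x ≠ 0 → DifferentiableAt ℂ (fun u => Q u / P u) x :=
    fun x hx hPx => (hQ.differentiableAt (isOpen_ball.mem_nhds hx)).div
      (hP.differentiableAt (isOpen_ball.mem_nhds hx)) hPx
  set f : ℂ → ℂ := fun x => limUnder (𝓝[≠] x) fun u => Q u / P u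
  have hf : ∀ x ∈ ball (0 : ℂ) 1, P x ≠ 0 → f x = Q x / P x := fun x hx hPx =>
    ((hdiv x hx hPx).continuousAt.tendsto.mono_left nhdsWithin_le_nhds).limUnder_eq
  have hnear : ∀ x ∈ ball (0 : ℂ) 1,
      ∀ᶠ u in 𝓝[≠] x, u ∈ ball (0 : ℂ) 1 ∧ P u ≠ 0 ∧ f u = Q u / P u := by
    intro x hx
    filter_upwards [eventually_ne_zero_nhdsNE hP hP₀ hx,
      mem_nhdsWithin_of_mem_nhds (isOpen_ball.mem_nhds hx)] with u hPu hu
    exact ⟨hu, hPu, hf u hu hPu⟩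
  have hfd : ∀ x ∈ ball (0 : ℂ) 1, DifferentiableAt ℂ f x := by
    intro x hx
    obtain ⟨s, hs, hsub⟩ := mem_nhdsWithin_iff_exists_mem_nhds_inter.mp (hnear x hx)
    have hd : DifferentiableOn ℂ (fun u => Q u / P u) (s \ {x}) := fun u hu =>
      (hdiv u (hsub hu).1 (hsub hu).2.1).differentiableWithinAt
    have hb : BddAbove (norm ∘ (fun u => Q u / P u) '' (s \ {x})) :=
      ⟨1, by rintro _ ⟨u, hu, rfl⟩; exact hQP u (hsub hu).1 (hsub hu).2.1⟩
    refine ((Complex.differentiableOn_update_limUnder_of_bddAbove hs hd hb).differentiableAt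
      hs).congr_of_eventuallyEq ?_
    filter_upwards [hs] with u hu
    rcases eq_or_ne u x with rfl | hux
    · simp [f]
    · rw [Function.update_of_ne hux]
      exact (hsub ⟨hu, hux⟩).2.2
  refine ⟨f, fun x hx => (hfd x hx).differentiableWithinAt, fun x hx => ?_, hf⟩
  rw [mem_closedBall_zero_iff]
  refine le_of_tendsto ((hfd x hx).continuousAt.norm.tendsto.mono_left
    (nhdsWithin_le_nhds (s := {x}ᶜ))) ?_
  filter_upwards [hnear x hx] with u ⟨hu, hPu, hfu⟩
  exact hfu ▸ hQP u hu hPu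

lemma mapsTo_ball_of_mapsTo_closedBall {f : ℂ → ℂ} (hd : DifferentiableOn ℂ f (ball 0 1))
    (hf : MapsTo f (ball 0 1) (closedBall 0 1))
    (hnc : ∃ x ∈ ball (0 : ℂ) 1, ∃ y ∈ ball (0 : ℂ) 1, f x ≠ f y) :
    MapsTo f (ball 0 1) (ball 0 1) := by
  intro z hz
  refine mem_ball_zero_iff.mpr ((mem_closedBall_zero_iff.mp (hf hz)).lt_of_ne fun h => ?_)
  obtain ⟨x, hx, y, hy, hxy⟩ := hnc
  have hmax : IsMaxOn (norm ∘ f) (ball 0 1) z := fun u hu => by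
    simpa [h] using mem_closedBall_zero_iff.mp (hf hu)
  have hc := Complex.eqOn_of_isPreconnected_of_isMaxOn_norm (convex_ball 0 1).isPreconnected
    isOpen_ball hd hz hmax
  exact hxy ((hc hx).trans (hc hy).symm)

/-- Equality in the Schwarz lemma: `σ z / z` has constant modulus `1`, so it is constant. -/
lemma exists_eq_mul_of_norm_eq {σ : ℂ → ℂ} (hd : DifferentiableOn ℂ σ (ball 0 1))
    (hmaps : MapsTo σ (ball 0 1) (ball 0 1)) (h₀ : σ 0 = 0)
    (hnorm : ∀ z ∈ ball (0 : ℂ) 1, ‖σ z‖ = ‖z‖) :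
    ∃ η : ℂ, ‖η‖ = 1 ∧ ∀ z ∈ ball (0 : ℂ) 1, σ z = η * z := by
  set g := dslope σ 0
  have hg : DifferentiableOn ℂ g (ball 0 1) :=
    (Complex.differentiableOn_dslope (ball_mem_nhds 0 one_pos)).mpr hd
  have hg₁ : ∀ z ∈ ball (0 : ℂ) 1, z ≠ 0 → ‖g z‖ = 1 := fun z hz hz₀ => by
    simp [g, dslope_of_ne _ hz₀, slope_def_field, h₀, hnorm z hz, hz₀]
  have hg₀ : ‖g 0‖ ≤ 1 := by
    have := Complex.norm_deriv_le_div_of_mapsTo_ball hd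
      (by rw [h₀]; exact hmaps.mono_right ball_subset_closedBall) one_pos
    rwa [div_one, ← dslope_same] at this
  have hz₁ : (1 / 2 : ℂ) ∈ ball (0 : ℂ) 1 := by
    rw [mem_ball_zero_iff, norm_div, norm_one, Complex.norm_two]
    norm_num
  have hmax : IsMaxOn (norm ∘ g) (ball 0 1) (1 / 2) := fun z hz => by
    show ‖g z‖ ≤ ‖g (1 / 2)‖
    rw [hg₁ _ hz₁ (by norm_num)]
    rcases eq_or_ne z 0 with rfl | hz₀
    · exact hg₀
    · exact (hg₁ z hz hz₀).le
  have hc := Complex.eqOn_of_isPreconnected_of_isMaxOn_norm (convex_ball 0 1).isPreconnected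
    isOpen_ball hg hz₁ hmax
  refine ⟨g (1 / 2), hg₁ _ hz₁ (by norm_num), fun z hz => ?_⟩
  have : (z - 0) • g z = σ z - σ 0 := sub_smul_dslope σ 0 z
  rw [hc hz, h₀] at this
  simpa [mul_comm] using this.symm

/-- `σ = f ∘ τ_a` with `a = g 0` and its inverse `τ_a ∘ g` both fix `0`, so by the Schwarz lemma
`σ` preserves norms and is a rotation. -/
theorem exists_mobius_of_invOn {f g : ℂ → ℂ} (hf : DifferentiableOn ℂ f (ball 0 1))
    (hg : DifferentiableOn ℂ g (ball 0 1)) (hfm : MapsTo f (ball 0 1) (ball 0 1))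
    (hgm : MapsTo g (ball 0 1) (ball 0 1)) (hinv : InvOn g f (ball 0 1) (ball 0 1)) :
    ∃ a η : ℂ, ‖a‖ < 1 ∧ ‖η‖ = 1 ∧ ∀ z ∈ ball (0 : ℂ) 1, f z = η * mobius a z := by
  have h0 : (0 : ℂ) ∈ ball (0 : ℂ) 1 := mem_ball_self one_pos
  set a := g 0
  have ha : ‖a‖ < 1 := mem_ball_zero_iff.mp (hgm h0)
  have hσd := hf.comp (differentiableOn_mobius ha) (mapsTo_mobius_ball ha)
  have hσm := hfm.comp (mapsTo_mobius_ball ha)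
  have hσ₀ : (f ∘ mobius a) 0 = 0 := by simp [a, hinv.2 h0]
  have hτd := (differentiableOn_mobius ha).comp hg hgm
  have hτm := (mapsTo_mobius_ball ha).comp hgm
  have hτ₀ : (mobius a ∘ g) 0 = 0 := mobius_self a
  have hnorm : ∀ z ∈ ball (0 : ℂ) 1, ‖(f ∘ mobius a) z‖ = ‖z‖ := by
    intro z hz
    refine le_antisymm (Complex.norm_le_norm_of_mapsTo_ball hσd
      (hσm.mono_right ball_subset_closedBall) hσ₀ (mem_ball_zero_iff.mp hz)) ?_
    have := Complex.norm_le_norm_of_mapsTo_ball hτd (hτm.mono_right ball_subset_closedBall) hτ₀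
      (mem_ball_zero_iff.mp (hσm hz))
    rwa [Function.comp_apply, Function.comp_apply, hinv.1 (mapsTo_mobius_ball ha hz),
      mobius_mobius ha (mem_ball_zero_iff.mp hz).le] at this
  obtain ⟨η, hη, hσ⟩ := exists_eq_mul_of_norm_eq hσd hσm hσ₀ hnorm
  refine ⟨a, η, ha, hη, fun z hz => ?_⟩
  have := hσ _ (mapsTo_mobius_ball ha hz)
  rwa [Function.comp_apply, mobius_mobius ha (mem_ball_zero_iff.mp hz).le] at this

section Forward

variable {ψ : ↥cD → ℂ} {T T' : (↥cD → ℂ) → (↥cD → ℂ)}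

lemma IsAlgAutOn.memDiscAlg_apply (hT : IsAlgAutOn (psiA ψ) T) (hψ : MemDiscAlg ψ)
    {f : ↥cD → ℂ} (hf : f ∈ psiA ψ) : MemDiscAlg (T f) :=
  hψ.of_mem_psiA (hT.1 f hf)

lemma IsAlgAutOn.exists_eventually_mem_ball_ne_zero (hT : IsAlgAutOn (psiA ψ) T)
    (hψ : MemDiscAlg ψ) (hψ₀ : ψ ≠ 0) :
    ∃ w₀ : ↥cD, (w₀ : ℂ) ∈ ball 0 1 ∧ ∀ᶠ w : ↥cD in 𝓝 w₀, (w : ℂ) ∈ ball 0 1 ∧ T ψ w ≠ 0 := by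
  have hTψ := hT.memDiscAlg_apply hψ self_mem_psiA
  obtain ⟨w₀, hw₀, hTw₀⟩ := hTψ.exists_mem_ball_ne_zero <|
    hT.apply_ne_zero (fun c _ hf => smul_mem_psiA c hf) self_mem_psiA hψ₀
  exact ⟨w₀, hw₀, hTψ.eventually_mem_ball_ne_zero hw₀ hTw₀⟩

/-- Off the zeros of `T ψ`, `evalPoint ψ T = T (ψ z) / T ψ`. -/
theorem exists_differentiableOn_evalPoint (hψ : MemDiscAlg ψ) (hψ₀ : ψ ≠ 0)
    (hT : IsAlgAutOn (psiA ψ) T) :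
    ∃ φ : ℂ → ℂ, DifferentiableOn ℂ φ (ball 0 1) ∧ MapsTo φ (ball 0 1) (closedBall 0 1) ∧
      ∀ w : ↥cD, (w : ℂ) ∈ ball 0 1 → T ψ w ≠ 0 → φ w = evalPoint ψ T w := by
  obtain ⟨P, -, hPd, hP⟩ := hT.memDiscAlg_apply hψ self_mem_psiA
  obtain ⟨Q, -, hQd, hQ⟩ := hT.memDiscAlg_apply hψ (mul_mem_psiA memDiscAlg_val)
  have hQP : ∀ w : ↥cD, T ψ w ≠ 0 → (evalPoint ψ T w : ℂ) = Q w / P w := fun w hw => by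
    rw [hP, hQ, evalPoint_spec hψ hT hw memDiscAlg_val, mul_div_cancel_left₀ _ hw]
  obtain ⟨w₀, hw₀, hev⟩ := hT.exists_eventually_mem_ball_ne_zero hψ hψ₀
  obtain ⟨φ, hφd, hφm, hφ⟩ := exists_differentiableOn_eq_div hPd hQd
    ⟨w₀, hw₀, by rw [hP]; exact hev.self_of_nhds.2⟩ fun x hx hPx => by
      have hx' := ball_subset_cD hx
      have hw : T ψ ⟨x, hx'⟩ ≠ 0 := by rwa [← hP]
      rw [show Q x / P x = _ from (hQP ⟨x, hx'⟩ hw).symm, ← mem_cD]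
      exact Subtype.prop _
  exact ⟨φ, hφd, hφm, fun w hw hTw => by rw [hφ w hw (by rwa [hP]), hQP w hTw]⟩

/-- `evalPoint ψ T` is injective, so its holomorphic extension is not constant and hence maps
the disc into the open disc. -/
theorem exists_differentiableOn_mapsTo_evalPoint (hψ : MemDiscAlg ψ) (hψ₀ : ψ ≠ 0)
    (hT : IsAlgAutOn (psiA ψ) T) (hT' : IsAlgAutOn (psiA ψ) T')
    (hTT' : ∀ f ∈ psiA ψ, T (T' f) = f) :
    ∃ φ : ℂ → ℂ, DifferentiableOn ℂ φ (ball 0 1) ∧ MapsTo φ (ball 0 1) (ball 0 1) ∧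
      ∀ w : ↥cD, (w : ℂ) ∈ ball 0 1 → T ψ w ≠ 0 → φ w = evalPoint ψ T w := by
  obtain ⟨φ, hφd, hφm, hφ⟩ := exists_differentiableOn_evalPoint hψ hψ₀ hT
  refine ⟨φ, hφd, mapsTo_ball_of_mapsTo_closedBall hφd hφm ?_, hφ⟩
  obtain ⟨w₀, hw₀, hev⟩ := hT.exists_eventually_mem_ball_ne_zero hψ hψ₀
  obtain ⟨w₁, hne, hw₁, hTw₁⟩ := exists_ne_of_eventually hw₀ hev
  obtain ⟨-, hTw₀⟩ := hev.self_of_nhds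
  refine ⟨w₁, hw₁, w₀, hw₀, fun h => hne ?_⟩
  rw [hφ _ hw₁ hTw₁, hφ _ hw₀ hTw₀] at h
  rw [← (evalPoint_evalPoint hψ hT hT' hTT' hTw₁).2, Subtype.ext h,
    (evalPoint_evalPoint hψ hT hT' hTT' hTw₀).2]

theorem leftInvOn_of_evalPoint (hψ : MemDiscAlg ψ) (hψ₀ : ψ ≠ 0) (hT : IsAlgAutOn (psiA ψ) T)
    (hT' : IsAlgAutOn (psiA ψ) T') (hTT' : ∀ f ∈ psiA ψ, T (T' f) = f) {φ θ : ℂ → ℂ}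
    (hφd : DifferentiableOn ℂ φ (ball 0 1)) (hφm : MapsTo φ (ball 0 1) (ball 0 1))
    (hφ : ∀ w : ↥cD, (w : ℂ) ∈ ball 0 1 → T ψ w ≠ 0 → φ w = evalPoint ψ T w)
    (hθd : DifferentiableOn ℂ θ (ball 0 1))
    (hθ : ∀ w : ↥cD, (w : ℂ) ∈ ball 0 1 → T' ψ w ≠ 0 → θ w = evalPoint ψ T' w) :
    LeftInvOn θ φ (ball 0 1) := by
  obtain ⟨w₀, hw₀, hev⟩ := hT.exists_eventually_mem_ball_ne_zero hψ hψ₀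
  refine fun z hz => ((hθd.comp hφd hφm).analyticOnNhd isOpen_ball)
    |>.eqOn_of_preconnected_of_eventuallyEq analyticOnNhd_id (convex_ball 0 1).isPreconnected hw₀
      (eventuallyEq_nhds_val hw₀ ?_) hz
  filter_upwards [hev] with w ⟨hw, hTw⟩
  obtain ⟨hT'u, hu⟩ := evalPoint_evalPoint hψ hT hT' hTT' hTw
  have hφw := hφ w hw hTw
  rw [Function.comp_apply, hφw, hθ _ (hφw ▸ hφm hw) hT'u, hu]

lemma eq_comp_of_eventually_evalPoint_eq (hψ : MemDiscAlg ψ) (hT : IsAlgAutOn (psiA ψ) T)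
    {φ : ↥cD → ↥cD} (hφ : ∀ f, MemDiscAlg f → MemDiscAlg (f ∘ φ)) {w₀ : ↥cD}
    (hw₀ : (w₀ : ℂ) ∈ ball 0 1) (hev : ∀ᶠ w in 𝓝 w₀, T ψ w ≠ 0 ∧ evalPoint ψ T w = φ w) :
    ∀ f ∈ psiA ψ, T f = f ∘ φ := by
  intro f hf
  obtain ⟨k, hk, rfl⟩ := mem_psiA.mp hf
  refine (hT.memDiscAlg_apply hψ hf).eq_of_eventuallyEq (hφ _ (hψ.mul hk)) hw₀ ?_
  filter_upwards [hev] with w ⟨hw, hφw⟩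
  rw [evalPoint_spec hψ hT hw hk, ← psi_evalPoint hψ hT hw, hφw]
  rfl

end Forward

section Main

variable {ψ : ↥cD → ℂ} {T : (↥cD → ℂ) → (↥cD → ℂ)}

theorem IsAlgAutOn.exists_isMobius_comp (hT : IsAlgAutOn (psiA ψ) T) (hψ : MemDiscAlg ψ)
    (hψ₀ : ψ ≠ 0) :
    ∃ Φ : ℂ → ℂ, IsMobius Φ ∧ ∃ φ : ↥cD → ↥cD, (∀ z : ↥cD, (φ z : ℂ) = Φ z) ∧
      (∃ g, InvDiscAlg g ∧ ∀ z, ψ (φ z) = ψ z * g z) ∧ ∀ f ∈ psiA ψ, T f = f ∘ φ := by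
  obtain ⟨T', hT', hTT', hT'T⟩ := hT.exists_inverse (fun _ hf _ hg => add_mem_psiA hf hg)
    (fun c _ hf => smul_mem_psiA c hf) (fun _ hf _ hg => mul_mem_psiA_of_mem hψ hf hg)
  obtain ⟨φ, hφd, hφm, hφ⟩ := exists_differentiableOn_mapsTo_evalPoint hψ hψ₀ hT hT' hTT'
  obtain ⟨θ, hθd, hθm, hθ⟩ := exists_differentiableOn_mapsTo_evalPoint hψ hψ₀ hT' hT hT'T
  obtain ⟨a, η, ha, hη, hφΦ⟩ := exists_mobius_of_invOn hφd hθd hφm hθm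
    ⟨leftInvOn_of_evalPoint hψ hψ₀ hT hT' hTT' hφd hφm hφ hθd hθ,
      leftInvOn_of_evalPoint hψ hψ₀ hT' hT hT'T hθd hθm hθ hφd hφ⟩
  have hΦ := isMobius_mul_mobius ha hη
  set φh := hΦ.mapsTo_cD.restrict _ cD cD
  have hφh : ∀ z, (φh z : ℂ) = η * mobius a z := fun z => rfl
  have hcomp : ∀ f ∈ psiA ψ, T f = f ∘ φh := by
    obtain ⟨w₀, hw₀, hev⟩ := hT.exists_eventually_mem_ball_ne_zero hψ hψ₀
    refine eq_comp_of_eventually_evalPoint_eq hψ hT (fun f hf => hf.comp_isMobius hΦ hφh) hw₀ ?_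
    filter_upwards [hev] with w ⟨hw, hTw⟩
    exact ⟨hTw, Subtype.ext ((hφ w hw hTw).symm.trans (hφΦ w hw))⟩
  obtain ⟨g, hg, hTψ⟩ := mem_psiA.mp (hT.1 ψ self_mem_psiA)
  obtain ⟨g', hg', hT'ψ⟩ := mem_psiA.mp (hT'.1 ψ self_mem_psiA)
  have hwt : ∀ z, ψ (φh z) = ψ z * g z := fun z => by
    rw [← Pi.mul_apply ψ g, ← hTψ, hcomp ψ self_mem_psiA, Function.comp_apply]
  have hg'φ := hg'.comp_isMobius hΦ hφh
  refine ⟨_, hΦ, φh, hφh, ⟨g, ⟨hg, g' ∘ φh, hg'φ, fun z => ?_⟩, hwt⟩, hcomp⟩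
  have h : ψ * (g * (g' ∘ φh)) = ψ * 1 := by
    calc ψ * (g * (g' ∘ φh)) = (ψ * g') ∘ φh := by ext z; simp [hwt, mul_assoc]
      _ = ψ * 1 := by rw [← hT'ψ, ← hcomp _ (hT'.1 ψ self_mem_psiA), hTT' ψ self_mem_psiA,
          mul_one]
  exact congrFun (MemDiscAlg.eq_of_mul_eq_mul hψ hψ₀ (hg.mul hg'φ) memDiscAlg_one h) z

lemma comp_mem_psiA {φ : ↥cD → ↥cD} (hφ : ∀ f, MemDiscAlg f → MemDiscAlg (f ∘ φ))
    {g : ↥cD → ℂ} (hg : MemDiscAlg g) (hwt : ∀ z, ψ (φ z) = ψ z * g z) {f : ↥cD → ℂ}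
    (hf : f ∈ psiA ψ) : f ∘ φ ∈ psiA ψ := by
  obtain ⟨k, hk, rfl⟩ := mem_psiA.mp hf
  exact ⟨g * (k ∘ φ), hg.mul (hφ k hk), funext fun z => by simp [hwt, mul_assoc]⟩

theorem isAlgAutOn_of_eq_comp (hψ : MemDiscAlg ψ) {Φ : ℂ → ℂ} (hΦ : IsMobius Φ)
    {φ : ↥cD → ↥cD} (hφ : ∀ z, (φ z : ℂ) = Φ z) {g : ↥cD → ℂ} (hg : InvDiscAlg g)
    (hwt : ∀ z, ψ (φ z) = ψ z * g z) (hT : ∀ f ∈ psiA ψ, T f = f ∘ φ) :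
    IsAlgAutOn (psiA ψ) T := by
  obtain ⟨Ψ, hΨ, hinv⟩ := hΦ.exists_inverse
  set φ' := hΨ.mapsTo_cD.restrict Ψ cD cD
  have hφ' : ∀ z, (φ' z : ℂ) = Ψ z := fun z => rfl
  have hφφ' : ∀ z, φ (φ' z) = z := fun z => Subtype.ext (by rw [hφ, hφ', (hinv z z.2).2])
  have hφ'φ : ∀ z, φ' (φ z) = z := fun z => Subtype.ext (by rw [hφ', hφ, (hinv z z.2).1])
  obtain ⟨hgA, h, hh, hgh⟩ := hg
  have hwt' : ∀ z, ψ (φ' z) = ψ z * h (φ' z) := fun z =>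
    calc ψ (φ' z) = ψ (φ' z) * g (φ' z) * h (φ' z) := by rw [mul_assoc, hgh, mul_one]
      _ = ψ z * h (φ' z) := by rw [← hwt, hφφ']
  have hcomp : ∀ f ∈ psiA ψ, f ∘ φ ∈ psiA ψ :=
    fun f => comp_mem_psiA (fun _ hf => hf.comp_isMobius hΦ hφ) hgA hwt
  have hcomp' : ∀ f ∈ psiA ψ, f ∘ φ' ∈ psiA ψ :=
    fun f => comp_mem_psiA (fun _ hf => hf.comp_isMobius hΨ hφ') (hh.comp_isMobius hΨ hφ') hwt'
  refine ⟨fun f hf => (hT f hf).symm ▸ hcomp f hf, fun f hf g hg => ?_, fun c f hf => ?_,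
    fun f hf g hg => ?_, fun f hf g hg hfg => ?_, fun f hf => ⟨f ∘ φ', hcomp' f hf, ?_⟩⟩
  · rw [hT _ (add_mem_psiA hf hg), hT f hf, hT g hg]
    rfl
  · rw [hT _ (smul_mem_psiA c hf), hT f hf]
    rfl
  · rw [hT _ (mul_mem_psiA_of_mem hψ hf hg), hT f hf, hT g hg]
    rfl
  · rw [hT f hf, hT g hg] at hfg
    ext z
    simpa [hφφ'] using congrFun hfg (φ' z)
  · rw [hT _ (hcomp' f hf)]
    ext z
    simp [hφ'φ]

end Main

/-- for `ψ ∈ A(𝔻)` not identically zero, `T` is an algebra automorphism of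
`ψ A(𝔻)` iff `T f = f ∘ φ̂` for the extension `φ̂` of some `φ ∈ Aut(𝔻)` satisfying
`ψ ∘ φ̂ = ψ · g` with `g` invertible in `A(𝔻)`. -/
theorem stmt_11 (ψ : ↥cD → ℂ) (hψ : MemDiscAlg ψ) (hne : ∃ z, ψ z ≠ 0)
    (T : (↥cD → ℂ) → (↥cD → ℂ)) :
    IsAlgAutOn (psiA ψ) T ↔
      ∃ Φ : ℂ → ℂ, IsMobius Φ ∧ ∃ φh : ↥cD → ↥cD,
        (∀ z : ↥cD, (↑(φh z) : ℂ) = Φ ↑z) ∧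
        (∃ g : ↥cD → ℂ, InvDiscAlg g ∧ ∀ z, ψ (φh z) = ψ z * g z) ∧
        ∀ f ∈ psiA ψ, T f = f ∘ φh := by
  refine ⟨fun hT => hT.exists_isMobius_comp hψ (Function.ne_iff.mpr hne), ?_⟩
  rintro ⟨Φ, hΦ, φh, hφh, ⟨g, hg, hwt⟩, hT⟩
  exact isAlgAutOn_of_eq_comp hψ hΦ hφh hg hwt hT
end

section
/- Let φ ∈ Aut(𝔻) and let ψ ∈ H^∞ be not identically zero. If the composition operator C_φ (f ↦ f ∘ φ) is a well-defined algebra automorphism of ψH^∞, then mult_ψ(φ(w)) = mult_ψ(w) for every zero w of ψ in 𝔻. -/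
open Complex Metric Set

local notation "𝔻" => Complex.UnitDisc

/-!
Extend `ψ`, `φ` and all cofactors to holomorphic functions on the unit ball and compare vanishing
orders at `w`. Let `d` be the order of `φ - φ w` at `w`, so that `ord_w (f ∘ φ) = d · ord_{φ w} f`.
Surjectivity of `C_φ` writes both `ψ` and `ψ · (z - w)` as `(ψ g) ∘ φ`, so `d` divides both
`mult_ψ w` and `mult_ψ w + 1`, forcing `d = 1`. Then `ψ = (ψ g₀) ∘ φ` gives
`mult_ψ (φ w) ≤ mult_ψ w`, and `ψ ∘ φ ∈ ψ H^∞` gives the reverse inequality.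
-/

open Filter Topology

theorem ENat.eq_one_of_mul_eq_of_mul_eq_add_one {a b d n : ℕ∞} (hn : n ≠ ⊤)
    (ha : a * d = n) (hb : b * d = n + 1) : d = 1 := by
  lift n to ℕ using hn
  have hbd : b * d ≠ 0 ∧ b * d ≠ ⊤ := by
    rw [hb]; exact ⟨by positivity, by norm_cast; exact ENat.natCast_ne_top _⟩
  have hb0 : b ≠ 0 := left_ne_zero_of_mul hbd.1
  have hd0 : d ≠ 0 := right_ne_zero_of_mul hbd.1
  have hdtop : d ≠ ⊤ := fun h => hbd.2 (by rw [h, ENat.mul_top hb0])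
  have hatop : a ≠ ⊤ := fun h => ENat.natCast_ne_top n (by rw [← ha, h, ENat.top_mul hd0])
  lift d to ℕ using hdtop
  lift a to ℕ using hatop
  have hbtop : b ≠ ⊤ := fun h => hbd.2 (by rw [h, ENat.top_mul hd0])
  lift b to ℕ using hbtop
  norm_cast at ha hb ⊢
  exact Nat.dvd_one.mp ((Nat.dvd_add_right (Dvd.intro_left a ha)).mp (Dvd.intro_left b hb))

theorem DifferentiableOn.exists_eq_pow_mul_of_analyticOrderAt_eq {F : ℂ → ℂ} {U : Set ℂ}
    (hU : IsOpen U) (hF : DifferentiableOn ℂ F U) {x : ℂ} (hx : x ∈ U) {k : ℕ}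
    (hk : analyticOrderAt F x = k) :
    ∃ G : ℂ → ℂ, DifferentiableOn ℂ G U ∧ G x ≠ 0 ∧ ∀ z ∈ U, F z = (z - x) ^ k * G z := by
  obtain ⟨g, hg, hgx, hFg⟩ := (hF.analyticAt (hU.mem_nhds hx)).analyticOrderAt_eq_natCast.mp hk
  set G := Function.update (fun z => F z / (z - x) ^ k) x (g x)
  have hGg : G =ᶠ[𝓝 x] g := by
    filter_upwards [hFg] with z hz
    rcases eq_or_ne z x with rfl | hzx
    · simp [G]
    · simp [G, hzx, hz, sub_ne_zero]
  refine ⟨G, fun z hz => ?_, by simpa [G] using hgx, fun z hz => ?_⟩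
  · rcases eq_or_ne z x with rfl | hzx
    · exact (hGg.differentiableAt_iff.mpr hg.differentiableAt).differentiableWithinAt
    · have hG : G =ᶠ[𝓝 z] fun z => F z / (z - x) ^ k := by
        filter_upwards [isOpen_compl_singleton.mem_nhds hzx] with y hy
        exact Function.update_of_ne hy _ _
      refine (hG.differentiableAt_iff.mpr ?_).differentiableWithinAt
      exact (hF.differentiableAt (hU.mem_nhds hz)).div (by fun_prop)
        (pow_ne_zero _ (sub_ne_zero.2 hzx))
  · rcases eq_or_ne z x with rfl | hzx
    · simpa [G] using hFg.self_of_nhds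
    · simp only [G, Function.update_of_ne hzx]
      field_simp [sub_ne_zero.2 hzx]

theorem DifferentiableOn.analyticOrderAt_ne_top_of_apply_ne_zero {F : ℂ → ℂ} {U : Set ℂ}
    (hU : IsOpen U) (hU' : IsPreconnected U) (hF : DifferentiableOn ℂ F U) {z₀ x : ℂ}
    (hz₀ : z₀ ∈ U) (hx : x ∈ U) (hFz₀ : F z₀ ≠ 0) : analyticOrderAt F x ≠ ⊤ := by
  refine (hF.analyticOnNhd hU).analyticOrderAt_ne_top_of_isPreconnected hU' hz₀ hx ?_
  rw [(hF.analyticAt (hU.mem_nhds hz₀)).analyticOrderAt_eq_zero.mpr hFz₀]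
  exact ENat.zero_ne_top

theorem analyticOrderAt_eq_of_comp_factorizations {F Φ H G₀ G₁ : ℂ → ℂ} {w : ℂ}
    (hΦ : AnalyticAt ℂ Φ w) (hF : AnalyticAt ℂ F w) (hFΦ : AnalyticAt ℂ F (Φ w))
    (hH : AnalyticAt ℂ H w) (hG₀ : AnalyticAt ℂ G₀ (Φ w)) (hG₁ : AnalyticAt ℂ G₁ (Φ w))
    (hN : analyticOrderAt F w ≠ ⊤) (h₁ : F ∘ Φ =ᶠ[𝓝 w] F * H)
    (h₀ : (F * G₀) ∘ Φ =ᶠ[𝓝 w] F) (h₂ : (F * G₁) ∘ Φ =ᶠ[𝓝 w] F * (· - w)) :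
    analyticOrderAt F (Φ w) = analyticOrderAt F w := by
  set d := analyticOrderAt (Φ · - Φ w) w
  have e₁ : analyticOrderAt F (Φ w) * d = analyticOrderAt F w + analyticOrderAt H w := by
    rw [← hFΦ.analyticOrderAt_comp hΦ, analyticOrderAt_congr h₁, analyticOrderAt_mul hF hH]
  have e₀ : (analyticOrderAt F (Φ w) + analyticOrderAt G₀ (Φ w)) * d = analyticOrderAt F w := by
    rw [← analyticOrderAt_mul hFΦ hG₀, ← (hFΦ.mul hG₀).analyticOrderAt_comp hΦ,
      analyticOrderAt_congr h₀]
  have e₂ : (analyticOrderAt F (Φ w) + analyticOrderAt G₁ (Φ w)) * d =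
      analyticOrderAt F w + 1 := by
    rw [← analyticOrderAt_mul hFΦ hG₁, ← (hFΦ.mul hG₁).analyticOrderAt_comp hΦ,
      analyticOrderAt_congr h₂, analyticOrderAt_mul hF (by fun_prop),
      analyticOrderAt_id_sub_const_self]
  have hd : d = 1 := ENat.eq_one_of_mul_eq_of_mul_eq_add_one hN e₀ e₂
  rw [hd, mul_one] at e₀ e₁
  exact le_antisymm (e₀ ▸ le_self_add) (e₁ ▸ le_self_add)

theorem eventuallyEq_nhds_of_forall_unitDisc {A B : ℂ → ℂ} (h : ∀ z : 𝔻, A z = B z) (w : 𝔻) :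
    A =ᶠ[𝓝 (w : ℂ)] B := by
  filter_upwards [isOpen_ball.mem_nhds w.2] with z hz
  lift z to 𝔻 using mem_ball_zero_iff.mp hz
  exact h z

theorem zeroOrderAt_iff_analyticOrderAt_eq {f : 𝔻 → ℂ} {F : ℂ → ℂ}
    (hF : DifferentiableOn ℂ F (ball 0 1)) (hFf : ∀ z : 𝔻, F z = f z) (x : 𝔻) (k : ℕ) :
    ZeroOrderAt f x k ↔ analyticOrderAt F x = k := by
  have hx : ball (0 : ℂ) 1 ∈ 𝓝 (x : ℂ) := isOpen_ball.mem_nhds x.2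
  constructor
  · rintro ⟨g, ⟨G, hG, hGg⟩, hgx, hfg⟩
    refine (hF.analyticAt hx).analyticOrderAt_eq_natCast.mpr
      ⟨G, hG.analyticAt hx, by rwa [hGg], ?_⟩
    filter_upwards [hx] with z hz
    lift z to 𝔻 using mem_ball_zero_iff.mp hz
    rw [hFf, hfg, hGg, smul_eq_mul]
  · intro hk
    obtain ⟨G, hG, hGx, hFG⟩ :=
      hF.exists_eq_pow_mul_of_analyticOrderAt_eq isOpen_ball x.2 hk
    exact ⟨fun z => G z, ⟨G, hG, fun _ => rfl⟩, hGx, fun z => (hFf z).symm.trans (hFG z z.2)⟩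

theorem memHinf_const (c : ℂ) : MemHinf fun _ => c :=
  ⟨⟨fun _ => c, differentiableOn_const c, fun _ => rfl⟩, ‖c‖, fun _ => le_rfl⟩

theorem memHinf_sub_const (w : ℂ) : MemHinf fun z : 𝔻 => (z : ℂ) - w := by
  refine ⟨⟨(· - w), (differentiable_id.sub_const w).differentiableOn, fun _ => rfl⟩,
    1 + ‖w‖, fun z => ?_⟩
  exact (norm_sub_le _ _).trans (by gcongr; exact z.norm_lt_one.le)

theorem self_mem_psiH (ψ : 𝔻 → ℂ) : ψ ∈ psiH ψ :=
  ⟨_, memHinf_const 1, by simp⟩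

theorem mul_sub_const_mem_psiH (ψ : 𝔻 → ℂ) (w : ℂ) : (fun z : 𝔻 => ψ z * (z - w)) ∈ psiH ψ :=
  ⟨_, memHinf_sub_const w, rfl⟩

namespace CompAutOn

variable {ψ : 𝔻 → ℂ} {φ : 𝔻 → 𝔻}

theorem exists_comp_eq_mul (hC : CompAutOn (psiH ψ) φ) :
    ∃ h, MemHinf h ∧ ∀ z, ψ (φ z) = ψ z * h z := by
  obtain ⟨h, hh, hψφ⟩ := hC.1 ψ (self_mem_psiH ψ)
  exact ⟨h, hh, congrFun hψφ⟩

theorem exists_mul_comp_eq (hC : CompAutOn (psiH ψ) φ) {f : 𝔻 → ℂ} (hf : f ∈ psiH ψ) :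
    ∃ g, MemHinf g ∧ ∀ z, ψ (φ z) * g (φ z) = f z := by
  obtain ⟨_, ⟨g, hg, rfl⟩, hgf⟩ := hC.2.2 hf
  exact ⟨g, hg, congrFun hgf⟩

end CompAutOn

theorem stmt_12_general (φ : 𝔻 → 𝔻) (hφ : IsDiscAut φ) (ψ : 𝔻 → ℂ) (hψ : MemHinf ψ)
    (hne : ∃ z, ψ z ≠ 0) (hC : CompAutOn (psiH ψ) φ)
    (w : 𝔻) (m : ℕ) :
    ZeroOrderAt ψ (φ w) m ↔ ZeroOrderAt ψ w m := by
  obtain ⟨⟨F, hF, hFψ⟩, -⟩ := hψ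
  obtain ⟨⟨Φ, hΦ, hΦφ⟩, -⟩ := hφ
  obtain ⟨h, ⟨⟨H, hH, hHh⟩, -⟩, hψφ⟩ := hC.exists_comp_eq_mul
  obtain ⟨g₀, ⟨⟨G₀, hG₀, hGg₀⟩, -⟩, hg₀⟩ := hC.exists_mul_comp_eq (self_mem_psiH ψ)
  obtain ⟨g₁, ⟨⟨G₁, hG₁, hGg₁⟩, -⟩, hg₁⟩ := hC.exists_mul_comp_eq (mul_sub_const_mem_psiH ψ w)
  have h₁ : F ∘ Φ =ᶠ[𝓝 (w : ℂ)] F * H :=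
    eventuallyEq_nhds_of_forall_unitDisc (fun z => by simp [hΦφ, hFψ, hHh, hψφ]) w
  have h₀ : (F * G₀) ∘ Φ =ᶠ[𝓝 (w : ℂ)] F :=
    eventuallyEq_nhds_of_forall_unitDisc (fun z => by simp [hΦφ, hFψ, hGg₀, hg₀]) w
  have h₂ : (F * G₁) ∘ Φ =ᶠ[𝓝 (w : ℂ)] F * (· - (w : ℂ)) :=
    eventuallyEq_nhds_of_forall_unitDisc (fun z => by simp [hΦφ, hFψ, hGg₁, hg₁]) w
  obtain ⟨z₀, hz₀⟩ := hne
  have hN : analyticOrderAt F w ≠ ⊤ := hF.analyticOrderAt_ne_top_of_apply_ne_zero isOpen_ball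
    (convex_ball 0 1).isPreconnected z₀.2 w.2 (hFψ z₀ ▸ hz₀)
  have hw : ball (0 : ℂ) 1 ∈ 𝓝 (w : ℂ) := isOpen_ball.mem_nhds w.2
  have hΦw : ball (0 : ℂ) 1 ∈ 𝓝 (Φ w) := isOpen_ball.mem_nhds (hΦφ w ▸ (φ w).2)
  rw [zeroOrderAt_iff_analyticOrderAt_eq hF hFψ, zeroOrderAt_iff_analyticOrderAt_eq hF hFψ,
    ← hΦφ w, analyticOrderAt_eq_of_comp_factorizations (hΦ.analyticAt hw) (hF.analyticAt hw)
      (hF.analyticAt hΦw) (hH.analyticAt hw) (hG₀.analyticAt hΦw) (hG₁.analyticAt hΦw)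
      hN h₁ h₀ h₂]

/-- if `φ ∈ Aut(𝔻)`, `ψ ∈ H^∞` is not identically zero and `C_φ` is a
well-defined algebra automorphism of `ψ H^∞`, then `mult_ψ (φ w) = mult_ψ w` for every
zero `w` of `ψ` in `𝔻`. -/
theorem stmt_12 (φ : 𝔻 → 𝔻) (hφ : IsDiscAut φ) (ψ : 𝔻 → ℂ) (hψ : MemHinf ψ)
    (hne : ∃ z, ψ z ≠ 0) (hC : CompAutOn (psiH ψ) φ)
    (w : 𝔻) (hw : ψ w = 0) (m : ℕ) :
    ZeroOrderAt ψ (φ w) m ↔ ZeroOrderAt ψ w m :=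
  stmt_12_general φ hφ ψ hψ hne hC w m
end
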